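/- arXiv:1511.06525 — 3 statements merged into one kernel-verified Lean document; each statement's English description precedes it below -/
import Mathlib

section
/- The uniformly extended Senn design is an extended dose-escalation design (it satisfies constraints (i) and (ii) with t = n+1) and its information matrix satisfies λ_min(N_A(ξ)) = 1/(4n); hence it is E-optimal among extended dose-escalation designs for comparing the drug doses with the placebo. -/
noncomputable section

open Matrix Finset

/-- An approximate design on treatments 0,…,n and cohorts 1,…,t:
nonnegative weights summing to 1. -/
def isDesign (n t : ℕ) (ξ : Fin (n+1) → Fin t → ℝ) : Prop :=
  (∀ i k, 0 ≤ ξ i k) ∧ ∑ i, ∑ k, ξ i k = 1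

/-- A dose-escalation design: (i) in cohort k ≤ n only treatments 0,…,k are
allowed (cohort `k : Fin t` has cohort number k+1, treatment `i : Fin (n+1)`
has treatment number i); (ii) each cohort has proportion 1/t. -/
def isEscalation (n t : ℕ) (ξ : Fin (n+1) → Fin t → ℝ) : Prop :=
  isDesign n t ξ ∧
  (∀ (i : Fin (n+1)) (k : Fin t), k.val + 1 ≤ n → k.val + 1 < i.val → ξ i k = 0) ∧
  (∀ k : Fin t, ∑ i, ξ i k = 1 / t)

/-- Treatment proportions r_i(ξ). -/
def repl (n t : ℕ) (ξ : Fin (n+1) → Fin t → ℝ) (i : Fin (n+1)) : ℝ := ∑ k, ξ i k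

/-- The information matrix N_A(ξ) = diag(r_1,…,r_n) − t·Z Z^T for comparing
the doses with the placebo. -/
def NA (n t : ℕ) (ξ : Fin (n+1) → Fin t → ℝ) : Matrix (Fin n) (Fin n) ℝ :=
  fun i j => (if i = j then repl n t ξ i.succ else 0) -
    (t : ℝ) * ∑ k, ξ i.succ k * ξ j.succ k

/-- Smallest eigenvalue of a real symmetric matrix, via the Rayleigh quotient. -/
def lambdaMin {m : ℕ} (A : Matrix (Fin m) (Fin m) ℝ) : ℝ :=
  sInf { r : ℝ | ∃ x : Fin m → ℝ, ∑ i, x i ^ 2 = 1 ∧ r = ∑ i, ∑ j, x i * A i j * x j }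

/-- The Senn design (t = n): in each cohort half the weight on placebo and half
on the highest allowed dose. -/
def senn (n : ℕ) : Fin (n+1) → Fin n → ℝ :=
  fun i k => if i.val = 0 ∨ i.val = k.val + 1 then 1 / (2 * n) else 0

/-- The uniformly extended Senn design (t = n+1): the Senn design in the first
n cohorts; in cohort n+1 half the weight on the placebo and the other half
uniformly on the n doses. -/
def unifSenn (n : ℕ) : Fin (n+1) → Fin (n+1) → ℝ :=
  fun i k =>
    if i.val = 0 then 1 / (2 * (n + 1))
    else if i.val = k.val + 1 then 1 / (2 * (n + 1))
    else if k.val = n then 1 / (2 * n * (n + 1))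
    else 0

/-! At the uniform unit vector `x = n^{-1/2} 𝟙` the quadratic form of `N_A(ξ)` equals
`(S - t ∑ₖ sₖ²) / n`, where `sₖ` is the total dose weight in cohort `k` and `S = ∑ₖ sₖ`.
Cauchy–Schwarz gives `t ∑ₖ sₖ² ≥ S²`, so this is at most `(S - S²) / n ≤ 1 / (4n)`, for every `ξ`.
For the uniformly extended Senn design the form is an explicit combination of `∑ xᵢ²` and
`(∑ xᵢ)²`, and `(∑ xᵢ)² ≤ n ∑ xᵢ²` bounds it below by `1 / (4n)` on the unit sphere. -/

section RayleighQuotient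

variable {m : ℕ}

def quadForm (A : Matrix (Fin m) (Fin m) ℝ) (x : Fin m → ℝ) : ℝ :=
  ∑ i, ∑ j, x i * A i j * x j

lemma abs_le_one_of_sum_sq_eq_one {x : Fin m → ℝ} (hx : ∑ i, x i ^ 2 = 1) (i : Fin m) :
    |x i| ≤ 1 := by
  have : x i ^ 2 ≤ 1 := hx ▸ single_le_sum (fun j _ => sq_nonneg (x j)) (mem_univ i)
  exact (sq_le_one_iff_abs_le_one _).mp this

lemma bddBelow_rayleigh (A : Matrix (Fin m) (Fin m) ℝ) :
    BddBelow {r : ℝ | ∃ x : Fin m → ℝ, ∑ i, x i ^ 2 = 1 ∧ r = quadForm A x} := by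
  refine ⟨-∑ i, ∑ j, |A i j|, ?_⟩
  rintro _ ⟨x, hx, rfl⟩
  rw [← sum_neg_distrib]
  refine sum_le_sum fun i _ => ?_
  rw [← sum_neg_distrib]
  refine sum_le_sum fun j _ => neg_le_of_abs_le ?_
  calc |x i * A i j * x j| = |x i| * |A i j| * |x j| := by rw [abs_mul, abs_mul]
    _ ≤ 1 * |A i j| * 1 := by
      gcongr <;> exact abs_le_one_of_sum_sq_eq_one hx _
    _ = |A i j| := by ring

lemma lambdaMin_le_quadForm (A : Matrix (Fin m) (Fin m) ℝ) {x : Fin m → ℝ}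
    (hx : ∑ i, x i ^ 2 = 1) : lambdaMin A ≤ quadForm A x :=
  csInf_le (bddBelow_rayleigh A) ⟨x, hx, rfl⟩

lemma le_lambdaMin (hm : 0 < m) {A : Matrix (Fin m) (Fin m) ℝ} {c : ℝ}
    (h : ∀ x : Fin m → ℝ, ∑ i, x i ^ 2 = 1 → c ≤ quadForm A x) : c ≤ lambdaMin A := by
  have hunit : ∑ i, (Pi.single (⟨0, hm⟩ : Fin m) (1 : ℝ) : Fin m → ℝ) i ^ 2 = 1 := by
    simp [Pi.single_apply]
  refine le_csInf ⟨_, _, hunit, rfl⟩ ?_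
  rintro _ ⟨x, hx, rfl⟩
  exact h x hx

end RayleighQuotient

lemma sum_sub_card_mul_sum_sq_le {ι : Type*} [Fintype ι] (s : ι → ℝ) :
    ∑ k, s k - Fintype.card ι * ∑ k, s k ^ 2 ≤ 1 / 4 := by
  have hcs := sq_sum_le_card_mul_sum_sq (s := (univ : Finset ι)) (f := s)
  rw [card_univ] at hcs
  nlinarith [sq_nonneg (∑ k, s k - 1 / 2)]

section InformationMatrix

variable {n t : ℕ}

lemma quadForm_NA (ξ : Fin (n+1) → Fin t → ℝ) (x : Fin n → ℝ) :
    quadForm (NA n t ξ) x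
      = ∑ i, repl n t ξ i.succ * x i ^ 2 - t * ∑ k, (∑ i, x i * ξ i.succ k) ^ 2 := by
  have hdiag : ∑ i, ∑ j, x i * (if i = j then repl n t ξ i.succ else 0) * x j
      = ∑ i, repl n t ξ i.succ * x i ^ 2 := by
    refine sum_congr rfl fun i _ => ?_
    simp only [mul_ite, ite_mul, mul_zero, zero_mul, sum_ite_eq, mem_univ, if_true]
    ring
  have hcross : ∑ i, ∑ j, x i * (t * ∑ k, ξ i.succ k * ξ j.succ k) * x j
      = t * ∑ k, (∑ i, x i * ξ i.succ k) ^ 2 := by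
    simp_rw [sq, sum_mul_sum, mul_sum, sum_mul]
    conv_lhs => enter [2, i]; rw [sum_comm]
    rw [sum_comm]
    exact sum_congr rfl fun k _ => sum_congr rfl fun i _ => sum_congr rfl fun j _ => by ring
  simp only [quadForm, NA, mul_sub, sub_mul, sum_sub_distrib, hdiag, hcross]

lemma quadForm_NA_const (ξ : Fin (n+1) → Fin t → ℝ) (c : ℝ) :
    quadForm (NA n t ξ) (fun _ => c)
      = c ^ 2 * (∑ k, ∑ i : Fin n, ξ i.succ k - t * ∑ k, (∑ i : Fin n, ξ i.succ k) ^ 2) := by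
  rw [quadForm_NA]
  simp only [repl, ← mul_sum, ← sum_mul, mul_pow]
  rw [sum_comm]
  ring

lemma lambdaMin_NA_le (hn : 0 < n) (t : ℕ) (ξ : Fin (n+1) → Fin t → ℝ) :
    lambdaMin (NA n t ξ) ≤ 1 / (4 * n) := by
  have hn' : (0 : ℝ) < n := by exact_mod_cast hn
  have hc : √(n : ℝ)⁻¹ ^ 2 = (n : ℝ)⁻¹ := Real.sq_sqrt (by positivity)
  have hunit : ∑ _i : Fin n, √(n : ℝ)⁻¹ ^ 2 = 1 := by
    simp [hn'.ne']
  calc lambdaMin (NA n t ξ) ≤ quadForm (NA n t ξ) (fun _ => √(n : ℝ)⁻¹) :=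
        lambdaMin_le_quadForm _ hunit
    _ = (n : ℝ)⁻¹
          * (∑ k, ∑ i : Fin n, ξ i.succ k - t * ∑ k, (∑ i : Fin n, ξ i.succ k) ^ 2) := by
        rw [quadForm_NA_const, hc]
    _ ≤ (n : ℝ)⁻¹ * (1 / 4) := by
        gcongr
        simpa using sum_sub_card_mul_sum_sq_le fun k => ∑ i : Fin n, ξ i.succ k
    _ = 1 / (4 * n) := by field_simp

end InformationMatrix

lemma sum_sum_eq_one_of_forall_sum_eq {m t : ℕ} (ht : 0 < t) {ξ : Fin m → Fin t → ℝ}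
    (h : ∀ k, ∑ i, ξ i k = 1 / t) : ∑ i, ∑ k, ξ i k = 1 := by
  rw [sum_comm]
  simp [h]
  field_simp

section UniformlyExtendedSenn

variable {n : ℕ}

lemma unifSenn_zero (k : Fin (n+1)) : unifSenn n 0 k = 1 / (2 * ((n : ℝ) + 1)) := by
  simp [unifSenn]

lemma unifSenn_succ (i : Fin n) (k : Fin (n+1)) :
    unifSenn n i.succ k = (if k = i.castSucc then 1 / (2 * ((n : ℝ) + 1)) else 0)
      + (if k = Fin.last n then 1 / (2 * (n : ℝ) * (n + 1)) else 0) := by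
  simp only [unifSenn, Fin.ext_iff, Fin.val_succ, Fin.val_castSucc, Fin.val_last]
  split_ifs <;> first | contradiction | omega | simp

lemma repl_unifSenn_succ (i : Fin n) :
    repl n (n+1) (unifSenn n) i.succ
      = 1 / (2 * ((n : ℝ) + 1)) + 1 / (2 * (n : ℝ) * (n + 1)) := by
  simp [repl, unifSenn_succ, sum_add_distrib]

lemma sum_mul_unifSenn_castSucc (x : Fin n → ℝ) (k : Fin n) :
    ∑ i, x i * unifSenn n i.succ k.castSucc = x k * (1 / (2 * ((n : ℝ) + 1))) := by
  simp [unifSenn_succ, Fin.castSucc_ne_last]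

lemma sum_mul_unifSenn_last (x : Fin n → ℝ) :
    ∑ i, x i * unifSenn n i.succ (Fin.last n) = (∑ i, x i) * (1 / (2 * (n : ℝ) * (n + 1))) := by
  simp [unifSenn_succ, (Fin.castSucc_ne_last _).symm, sum_mul]

lemma sum_unifSenn (hn : 0 < n) (k : Fin (n+1)) :
    ∑ i, unifSenn n i k = 1 / ((n + 1 : ℕ) : ℝ) := by
  have hn' : (n : ℝ) ≠ 0 := by positivity
  rw [Fin.sum_univ_succ, unifSenn_zero]
  induction k using Fin.lastCases with
  | last =>
    have h := sum_mul_unifSenn_last (fun _ : Fin n => (1 : ℝ))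
    simp only [one_mul, sum_const, card_univ, Fintype.card_fin, nsmul_eq_mul, mul_one] at h
    rw [h]
    field_simp
    push_cast
    ring
  | cast k =>
    have h := sum_mul_unifSenn_castSucc (fun _ => (1 : ℝ)) k
    simp only [one_mul] at h
    rw [h]
    field_simp
    push_cast
    ring

lemma isEscalation_unifSenn (hn : 0 < n) : isEscalation n (n+1) (unifSenn n) := by
  refine ⟨⟨fun i k => ?_, sum_sum_eq_one_of_forall_sum_eq n.succ_pos (sum_unifSenn hn)⟩,
    fun i k hk hik => ?_, sum_unifSenn hn⟩
  · unfold unifSenn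
    split_ifs <;> positivity
  · simp only [unifSenn]
    rw [if_neg (by omega), if_neg (by omega), if_neg (by omega)]

lemma quadForm_NA_unifSenn (x : Fin n → ℝ) :
    quadForm (NA n (n+1) (unifSenn n)) x
      = (1 / (2 * ((n : ℝ) + 1)) + 1 / (2 * (n : ℝ) * (n + 1))) * ∑ i, x i ^ 2
        - (n + 1) * ((1 / (2 * ((n : ℝ) + 1))) ^ 2 * ∑ i, x i ^ 2
          + (1 / (2 * (n : ℝ) * (n + 1))) ^ 2 * (∑ i, x i) ^ 2) := by
  rw [quadForm_NA, Fin.sum_univ_castSucc]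
  simp only [repl_unifSenn_succ, sum_mul_unifSenn_castSucc, sum_mul_unifSenn_last, mul_pow,
    ← sum_mul, ← mul_sum]
  push_cast
  ring

lemma one_div_four_mul_le_quadForm_NA_unifSenn (hn : 0 < n) {x : Fin n → ℝ}
    (hx : ∑ i, x i ^ 2 = 1) : 1 / (4 * n) ≤ quadForm (NA n (n+1) (unifSenn n)) x := by
  have hn' : (n : ℝ) ≠ 0 := by positivity
  have hcs : (∑ i, x i) ^ 2 ≤ n := by
    simpa [hx] using sq_sum_le_card_mul_sum_sq (s := (univ : Finset (Fin n))) (f := x)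
  rw [quadForm_NA_unifSenn, hx]
  calc 1 / (4 * (n : ℝ))
      = (1 / (2 * ((n : ℝ) + 1)) + 1 / (2 * (n : ℝ) * (n + 1))) * 1
        - (n + 1) * ((1 / (2 * ((n : ℝ) + 1))) ^ 2 * 1
          + (1 / (2 * (n : ℝ) * (n + 1))) ^ 2 * n) := by
        field_simp
        ring
    _ ≤ _ := by gcongr

end UniformlyExtendedSenn

/-- The uniformly extended Senn design is an extended dose-escalation design,
attains λ_min(N_A) = 1/(4n), and is E-optimal among extended designs. -/
theorem stmt4 (n : ℕ) (hn : 2 ≤ n) :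
    isEscalation n (n+1) (unifSenn n) ∧
    lambdaMin (NA n (n+1) (unifSenn n)) = 1 / (4 * n) ∧
    (∀ ξ : Fin (n+1) → Fin (n+1) → ℝ, isEscalation n (n+1) ξ →
      lambdaMin (NA n (n+1) ξ) ≤ lambdaMin (NA n (n+1) (unifSenn n))) := by
  have hn0 : 0 < n := by omega
  have hval : lambdaMin (NA n (n+1) (unifSenn n)) = 1 / (4 * n) :=
    le_antisymm (lambdaMin_NA_le hn0 _ _)
      (le_lambdaMin hn0 fun _ => one_div_four_mul_le_quadForm_NA_unifSenn hn0)
  exact ⟨isEscalation_unifSenn hn0, hval, fun ξ _ => hval ▸ lambdaMin_NA_le hn0 _ ξ⟩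
end
end

section
/- For every standard dose-escalation design ξ (t = n) with N_A(ξ) invertible, 1_n^T N_A(ξ)^{-1} 1_n ≥ 4n², and the Senn design attains equality (indeed N_A of the Senn design equals (1/(4n))·I_n). Consequently, the Senn design (the E-optimal standard design) is c-optimal for the average dose effect compared with the placebo: it minimizes the variance of the least-squares estimator of (1/n)∑_{i=1}^n τ_i − τ_0, which is proportional to (1/n²)·1_n^T N_A(ξ)^{-1} 1_n. -/
/-!
The quadratic form of `N_A(ξ)` splits over the cohorts as
`∑ₖ (∑ᵢ xᵢ² ξᵢₖ - t (∑ᵢ xᵢ ξᵢₖ)²)`. A cohort puts total weight at most `1/t` on the doses, so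
by Cauchy–Schwarz every summand is nonnegative and `N_A(ξ)` is positive semidefinite; at `x = 1`
each summand has the form `s - t s² ≤ 1/(4t)`, so `1ᵀ N_A 1 ≤ 1/4`. Cauchy–Schwarz for the
semi-inner product `⟨u, w⟩ = uᵀ N_A w`, applied to `1` and `N_A⁻¹ 1`, gives
`n² ≤ (1ᵀ N_A 1)(1ᵀ N_A⁻¹ 1)`, whence `1ᵀ N_A⁻¹ 1 ≥ 4n²`.
-/

noncomputable section

open Matrix Finset

lemma dotProduct_NA_mulVec (n t : ℕ) (ξ : Fin (n+1) → Fin t → ℝ) (x : Fin n → ℝ) :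
    x ⬝ᵥ NA n t ξ *ᵥ x =
      ∑ k, (∑ i, x i ^ 2 * ξ i.succ k - t * (∑ i, x i * ξ i.succ k) ^ 2) := by
  simp only [dotProduct, mulVec, NA, repl, sub_mul, mul_sub, ite_mul, zero_mul,
    Finset.sum_sub_distrib, Finset.sum_ite_eq, Finset.mem_univ, if_true, sq, Finset.mul_sum,
    Finset.sum_mul]
  congr 1
  · rw [Finset.sum_comm]
    exact Finset.sum_congr rfl fun _ _ => Finset.sum_congr rfl fun _ _ => by ring
  · rw [Finset.sum_comm_cycle]
    refine Finset.sum_congr rfl fun k _ => ?_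
    rw [Finset.sum_comm]
    exact Finset.sum_congr rfl fun _ _ => Finset.sum_congr rfl fun _ _ => by ring

lemma isHermitian_NA (n t : ℕ) (ξ : Fin (n+1) → Fin t → ℝ) : (NA n t ξ).IsHermitian := by
  ext i j
  simp only [conjTranspose_apply, star_trivial, NA, eq_comm (a := i), mul_comm (ξ j.succ _)]
  split_ifs with h
  · rw [h]
  · rfl

lemma posSemidef_NA {n t : ℕ} {ξ : Fin (n+1) → Fin t → ℝ} (hξ : isEscalation n t ξ) :
    (NA n t ξ).PosSemidef := by
  obtain ⟨⟨hξ0, -⟩, -, hcohort⟩ := hξ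
  refine .of_dotProduct_mulVec_nonneg (isHermitian_NA n t ξ) fun x => ?_
  rw [star_trivial, dotProduct_NA_mulVec]
  refine Finset.sum_nonneg fun k _ => ?_
  have hdoses : (t : ℝ) * ∑ i : Fin n, ξ i.succ k ≤ 1 := by
    have ht : (t : ℝ) ≠ 0 := by have := k.pos; positivity
    have := hcohort k
    rw [Fin.sum_univ_succ] at this
    calc (t : ℝ) * ∑ i : Fin n, ξ i.succ k ≤ t * (1 / t) := by
          gcongr; linarith [hξ0 0 k]
      _ = 1 := by field_simp
  have hcs : (∑ i, x i * ξ i.succ k) ^ 2 ≤ (∑ i, x i ^ 2 * ξ i.succ k) * ∑ i : Fin n, ξ i.succ k :=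
    Finset.sum_sq_le_sum_mul_sum_of_sq_le_mul _ (fun _ _ => mul_nonneg (sq_nonneg _) (hξ0 _ _))
      (fun _ _ => hξ0 _ _) fun _ _ => le_of_eq (by ring)
  have hquad : 0 ≤ ∑ i, x i ^ 2 * ξ i.succ k :=
    Finset.sum_nonneg fun i _ => mul_nonneg (sq_nonneg _) (hξ0 _ _)
  nlinarith

lemma one_dotProduct_NA_mulVec_one_le (n t : ℕ) (ξ : Fin (n+1) → Fin t → ℝ) :
    1 ⬝ᵥ NA n t ξ *ᵥ 1 ≤ 1 / 4 := by
  rw [dotProduct_NA_mulVec]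
  simp only [Pi.one_apply, one_pow, one_mul]
  calc _ ≤ ∑ _k : Fin t, 1 / (4 * (t : ℝ)) := Finset.sum_le_sum fun k _ => by
        have ht : (0 : ℝ) < t := by exact_mod_cast k.pos
        rw [le_div_iff₀ (by positivity)]
        nlinarith [sq_nonneg (2 * t * ∑ i : Fin n, ξ i.succ k - 1)]
    _ ≤ 1 / 4 := by
      rw [Finset.sum_const, Finset.card_univ, Fintype.card_fin, nsmul_eq_mul, mul_one_div]
      exact div_le_of_le_mul₀ (by positivity) (by norm_num) (by linarith)

lemma Matrix.one_dotProduct_mulVec_one {ι : Type*} [Fintype ι] (M : Matrix ι ι ℝ) :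
    1 ⬝ᵥ M *ᵥ 1 = ∑ i, ∑ j, M i j := by
  simp [one_dotProduct, mulVec, dotProduct_one]

lemma Matrix.PosSemidef.sq_dotProduct_mulVec_le {ι : Type*} [Fintype ι] {A : Matrix ι ι ℝ}
    (hA : A.PosSemidef) (u w : ι → ℝ) :
    (u ⬝ᵥ A *ᵥ w) ^ 2 ≤ (u ⬝ᵥ A *ᵥ u) * (w ⬝ᵥ A *ᵥ w) := by
  have hsymm : w ⬝ᵥ A *ᵥ u = u ⬝ᵥ A *ᵥ w := by
    rw [dotProduct_mulVec, ← mulVec_transpose, dotProduct_comm,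
      ← conjTranspose_eq_transpose_of_trivial, hA.isHermitian.eq]
  have hquad : ∀ c : ℝ,
      0 ≤ (w ⬝ᵥ A *ᵥ w) * (c * c) + 2 * (u ⬝ᵥ A *ᵥ w) * c + u ⬝ᵥ A *ᵥ u := fun c => by
    have h := hA.dotProduct_mulVec_nonneg (u + c • w)
    simp only [star_trivial, mulVec_add, mulVec_smul, dotProduct_add, add_dotProduct,
      dotProduct_smul, smul_dotProduct, smul_eq_mul, hsymm] at h
    linarith
  have h := discrim_le_zero hquad
  rw [discrim] at h
  nlinarith

lemma Matrix.PosSemidef.card_sq_le_mul_one_dotProduct_inv_mulVec_one {ι : Type*} [Fintype ι]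
    [DecidableEq ι] {A : Matrix ι ι ℝ} (hA : A.PosSemidef) (hdet : IsUnit A.det) :
    (Fintype.card ι : ℝ) ^ 2 ≤ (1 ⬝ᵥ A *ᵥ 1) * (1 ⬝ᵥ A⁻¹ *ᵥ 1) := by
  have hinv : A *ᵥ (A⁻¹ *ᵥ 1) = 1 := by
    rw [mulVec_mulVec, mul_nonsing_inv _ hdet, one_mulVec]
  simpa only [hinv, one_dotProduct_one, dotProduct_comm _ (1 : ι → ℝ)] using
    hA.sq_dotProduct_mulVec_le 1 (A⁻¹ *ᵥ 1)

lemma four_mul_sq_le_sum_inv_NA {n t : ℕ} {ξ : Fin (n+1) → Fin t → ℝ}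
    (hξ : isEscalation n t ξ) (hdet : IsUnit (NA n t ξ).det) :
    4 * (n : ℝ) ^ 2 ≤ ∑ i, ∑ j, (NA n t ξ)⁻¹ i j := by
  have hA := posSemidef_NA hξ
  have hcs := hA.card_sq_le_mul_one_dotProduct_inv_mulVec_one hdet
  have ha := one_dotProduct_NA_mulVec_one_le n t ξ
  have ha0 := hA.dotProduct_mulVec_nonneg 1
  have hb0 := hA.inv.dotProduct_mulVec_nonneg 1
  rw [star_trivial] at ha0 hb0
  rw [Fintype.card_fin] at hcs
  rw [← one_dotProduct_mulVec_one]
  nlinarith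

lemma senn_succ (n : ℕ) (i k : Fin n) :
    senn n i.succ k = if k = i then 1 / (2 * (n : ℝ)) else 0 := by
  have hsupp : (i.succ.val = 0 ∨ i.succ.val = k.val + 1) ↔ k = i := by
    rw [Fin.val_succ, Fin.ext_iff]; omega
  simp only [senn, hsupp]

lemma NA_senn (n : ℕ) :
    NA n n (senn n) = (1 / (4 * (n : ℝ))) • (1 : Matrix (Fin n) (Fin n) ℝ) := by
  ext i j
  have hn : (n : ℝ) ≠ 0 := by have := i.pos; positivity
  simp only [NA, repl, senn_succ, Matrix.smul_apply, one_apply, smul_eq_mul, mul_ite, mul_zero,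
    ite_mul, zero_mul, Finset.sum_ite_eq', Finset.mem_univ, if_true]
  obtain rfl | hij := eq_or_ne i j
  · simp only [if_true]
    field_simp
    ring
  · simp [hij, hij.symm]

lemma sum_inv_NA_senn (n : ℕ) : ∑ i, ∑ j, (NA n n (senn n))⁻¹ i j = 4 * (n : ℝ) ^ 2 := by
  rcases Nat.eq_zero_or_pos n with rfl | hn
  · simp
  have hn' : (n : ℝ) ≠ 0 := by positivity
  rw [NA_senn, inv_eq_left_inv (B := (4 * n : ℝ) • 1) (by rw [smul_mul_smul_comm]; field_simp; simp)]
  simp only [Matrix.smul_apply, one_apply, smul_eq_mul, mul_ite, mul_one, mul_zero, sum_ite_eq,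
    mem_univ, if_true, sum_const, card_univ, Fintype.card_fin, nsmul_eq_mul]
  ring

theorem stmt8_general (n : ℕ) :
    (∀ ξ : Fin (n+1) → Fin n → ℝ, isEscalation n n ξ → IsUnit (NA n n ξ).det →
      4 * (n : ℝ) ^ 2 ≤ ∑ i, ∑ j, (NA n n ξ)⁻¹ i j) ∧
    NA n n (senn n) = (1 / (4 * (n : ℝ))) • (1 : Matrix (Fin n) (Fin n) ℝ) ∧
    ∑ i, ∑ j, (NA n n (senn n))⁻¹ i j = 4 * (n : ℝ) ^ 2 :=
  ⟨fun _ hξ hdet => four_mul_sq_le_sum_inv_NA hξ hdet, NA_senn n, sum_inv_NA_senn n⟩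

/-- For every standard dose-escalation design with invertible N_A, the sum of
all entries of N_A(ξ)⁻¹ is at least 4n²; the Senn design satisfies
N_A = (1/(4n))·I and attains the value 4n². Hence the Senn design minimizes
the variance of the least-squares estimator of (1/n)∑ᵢ τᵢ − τ₀, which is
proportional to (1/n²)·1ₙ^T N_A(ξ)⁻¹ 1ₙ. -/
theorem stmt8 (n : ℕ) (hn : 2 ≤ n) :
    (∀ ξ : Fin (n+1) → Fin n → ℝ, isEscalation n n ξ → IsUnit (NA n n ξ).det →
      4 * (n : ℝ) ^ 2 ≤ ∑ i, ∑ j, (NA n n ξ)⁻¹ i j) ∧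
    NA n n (senn n) = (1 / (4 * (n : ℝ))) • (1 : Matrix (Fin n) (Fin n) ℝ) ∧
    ∑ i, ∑ j, (NA n n (senn n))⁻¹ i j = 4 * (n : ℝ) ^ 2 :=
  stmt8_general n
end
end

section
/- The highest-dose extended Senn design ξ_H is LV-optimal among extended dose-escalation designs (t = n+1): (a) for every extended dose-escalation design ξ, every stage k ∈ {1,…,n}, and every u with M^{(k)}(ξ) u = c_k, one has c_k^T u ≥ 4(n+1), and for ξ_H and each such k there exists u with M^{(k)}(ξ_H) u = c_k and c_k^T u = 4(n+1); (b) for every extended dose-escalation design ξ and every u with M(ξ) u = c_n (the full moment matrix, all n+1 cohorts), one has c_n^T u ≥ 2(n+1), and for ξ_H there exists u with M(ξ_H) u = c_n and c_n^T u = 2(n+1). -/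
noncomputable section

open Matrix Finset

/-- Index of the parameter vector β = (τ₀,…,τₙ, μ, θ₁,…,θ_t) ∈ ℝ^{n+t+2}. -/
abbrev PIdx (n t : ℕ) := Fin (n+1) ⊕ (Unit ⊕ Fin t)

/-- The regression vector f(i,k) = (e_{i+1}^T, 1, e_k^T)^T. -/
def fvec (n t : ℕ) (i : Fin (n+1)) (k : Fin t) : PIdx n t → ℝ :=
  fun j => match j with
  | Sum.inl a => if a = i then 1 else 0
  | Sum.inr (Sum.inl _) => 1
  | Sum.inr (Sum.inr b) => if b = k then 1 else 0

/-- The moment matrix M(ξ) = ∑_{i,k} ξ(i,k) f(i,k) f(i,k)^T. -/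
def momM (n t : ℕ) (ξ : Fin (n+1) → Fin t → ℝ) : Matrix (PIdx n t) (PIdx n t) ℝ :=
  ∑ i, ∑ k, ξ i k • Matrix.vecMulVec (fvec n t i k) (fvec n t i k)

/-- The stage-k moment matrix M^{(k)}(ξ): only trials in the first k cohorts
(cohorts with cohort number ≤ k) are kept. -/
def momMstage (n t : ℕ) (ξ : Fin (n+1) → Fin t → ℝ) (k : ℕ) :
    Matrix (PIdx n t) (PIdx n t) ℝ :=
  ∑ i, ∑ j ∈ Finset.univ.filter (fun j : Fin t => j.val < k),
    ξ i j • Matrix.vecMulVec (fvec n t i j) (fvec n t i j)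

/-- The vector c_k, with −1 in the coordinate of τ₀, +1 in the coordinate of
τ_k, and 0 elsewhere (so c_k^T β = τ_k − τ₀). -/
def cvec (n t k : ℕ) : PIdx n t → ℝ :=
  fun j => match j with
  | Sum.inl a => if a.val = 0 then -1 else if a.val = k then 1 else 0
  | Sum.inr _ => 0

/-- The highest-dose extended Senn design (t = n+1): the Senn design in the
first n cohorts; cohort n+1 replicates cohort n. -/
def highSenn (n : ℕ) : Fin (n+1) → Fin (n+1) → ℝ :=
  fun i k =>
    if i.val = 0 then 1 / (2 * (n + 1))
    else if i.val = k.val + 1 then 1 / (2 * (n + 1))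
    else if i.val = n ∧ k.val = n then 1 / (2 * (n + 1))
    else 0

/-!
If `M u = c` for `M = ∑ ξ(i,j) f(i,j) f(i,j)ᵀ`, Cauchy–Schwarz for the form of `M` gives
`(vᵀc)² ≤ (vᵀMv)(cᵀu)` for every `v`. Take `v = e_{τ_K} - t ∑_j ξ(K,j) e_{θ_j}`: then `vᵀc = 1`
and, since every cohort has weight `1/t`, `vᵀMv = ∑_j ξ(K,j)(1 - t ξ(K,j))`, where each summand
is at most `1/(4t)` and vanishes unless dose `K` is given in cohort `j`. Dose escalation allows
this in one cohort at stage `k` and in two cohorts (`n` and `n+1`) for the full design, so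
`cᵀu ≥ 4t` resp. `2t`. The design `ξ_H` gives placebo and dose `K` weight `1/(2t)` each in
exactly these `m` cohorts, and there `u = (4t/m)(e_{τ_K} - ½ ∑ e_{θ_j})` solves `M u = c`.
-/

section

variable {n t : ℕ}

lemma fvec_dotProduct (i : Fin (n+1)) (j : Fin t) (v : PIdx n t → ℝ) :
    fvec n t i j ⬝ᵥ v = v (.inl i) + v (.inr (.inl ())) + v (.inr (.inr j)) := by
  simp [fvec, dotProduct, Fintype.sum_sum_type, ite_mul, add_assoc]

lemma cvec_dotProduct {k : ℕ} {K : Fin (n+1)} (hK : K.val = k) (hk : k ≠ 0)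
    (v : PIdx n t → ℝ) : cvec n t k ⬝ᵥ v = v (.inl K) - v (.inl 0) := by
  have hK0 : K ≠ 0 := fun h => hk (by simp [← hK, h])
  simp only [cvec, dotProduct, Fintype.sum_sum_type, ite_mul, neg_one_mul, one_mul, zero_mul,
    sum_const_zero, add_zero]
  rw [Fintype.sum_eq_add 0 K hK0.symm]
  · simp only [Fin.val_zero, if_pos, hK, hk, if_false]
    ring
  · rintro i ⟨hi0, hiK⟩
    have h1 : i.val ≠ 0 := fun h => hi0 (Fin.ext h)
    have h2 : i.val ≠ k := fun h => hiK (Fin.ext (h.trans hK.symm))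
    simp [h1, h2]

lemma fvec_sub_fvec_zero {K : Fin (n+1)} (hK : K ≠ 0) (j : Fin t) :
    fvec n t K j - fvec n t 0 j = cvec n t K.val := by
  have hK' : K.val ≠ 0 := fun h => hK (Fin.ext h)
  funext p
  rcases p with a | _ | b
  · by_cases ha : a = 0
    · subst ha; simp [fvec, cvec, hK.symm]
    · have ha' : a.val ≠ 0 := fun h => ha (Fin.ext h)
      by_cases haK : a = K
      · subst haK; simp [fvec, cvec, ha, ha']
      · simp [fvec, cvec, ha, ha', haK, Fin.val_eq_val]
  · simp [fvec, cvec]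
  · simp [fvec, cvec]

lemma momM_eq_momMstage (ξ : Fin (n+1) → Fin t → ℝ) : momM n t ξ = momMstage n t ξ t := by
  simp [momM, momMstage]

lemma momMstage_mulVec (ξ : Fin (n+1) → Fin t → ℝ) (s : ℕ) (u : PIdx n t → ℝ) :
    momMstage n t ξ s *ᵥ u = ∑ i, ∑ j ∈ univ.filter (fun j : Fin t => j.val < s),
      (ξ i j * (fvec n t i j ⬝ᵥ u)) • fvec n t i j := by
  simp only [momMstage, sum_mulVec, smul_mulVec, vecMulVec_mulVec, op_smul_eq_smul, smul_smul]

lemma dotProduct_momMstage_mulVec (ξ : Fin (n+1) → Fin t → ℝ) (s : ℕ) (u v : PIdx n t → ℝ) :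
    v ⬝ᵥ (momMstage n t ξ s *ᵥ u) = ∑ i, ∑ j ∈ univ.filter (fun j : Fin t => j.val < s),
      ξ i j * ((fvec n t i j ⬝ᵥ v) * (fvec n t i j ⬝ᵥ u)) := by
  rw [momMstage_mulVec]
  simp only [dotProduct_sum, dotProduct_smul, smul_eq_mul]
  refine sum_congr rfl fun i _ => sum_congr rfl fun j _ => ?_
  rw [dotProduct_comm v]
  ring

lemma sq_dotProduct_momMstage_mulVec_le {ξ : Fin (n+1) → Fin t → ℝ} (hpos : ∀ i j, 0 ≤ ξ i j)
    (s : ℕ) (u v : PIdx n t → ℝ) :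
    (v ⬝ᵥ (momMstage n t ξ s *ᵥ u)) ^ 2 ≤
      (v ⬝ᵥ (momMstage n t ξ s *ᵥ v)) * (u ⬝ᵥ (momMstage n t ξ s *ᵥ u)) := by
  simp only [dotProduct_momMstage_mulVec, ← sum_product']
  exact sum_sq_le_sum_mul_sum_of_sq_le_mul _
    (fun p _ => mul_nonneg (hpos _ _) (mul_self_nonneg _))
    (fun p _ => mul_nonneg (hpos _ _) (mul_self_nonneg _)) (fun p _ => le_of_eq (by ring))

lemma dotProduct_momMstage_mulVec_self_nonneg {ξ : Fin (n+1) → Fin t → ℝ}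
    (hpos : ∀ i j, 0 ≤ ξ i j) (s : ℕ) (u : PIdx n t → ℝ) :
    0 ≤ u ⬝ᵥ (momMstage n t ξ s *ᵥ u) := by
  rw [dotProduct_momMstage_mulVec]
  exact sum_nonneg fun i _ => sum_nonneg fun j _ => mul_nonneg (hpos i j) (mul_self_nonneg _)

/-- The cohort coordinates `θ_j = -t ξ(K, j)` minimise `vᵀ M v` among the `v` with
`τ`-part `e_K` and `μ = 0`. -/
def testVec (ξ : Fin (n+1) → Fin t → ℝ) (K : Fin (n+1)) : PIdx n t → ℝ :=
  Sum.elim (fun i => if i = K then 1 else 0) (Sum.elim 0 fun j => -(t * ξ K j))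

lemma fvec_dotProduct_testVec (ξ : Fin (n+1) → Fin t → ℝ) (K i : Fin (n+1)) (j : Fin t) :
    fvec n t i j ⬝ᵥ testVec ξ K = (if i = K then 1 else 0) - t * ξ K j := by
  simp [fvec_dotProduct, testVec, sub_eq_add_neg]

lemma testVec_dotProduct_momMstage_mulVec {ξ : Fin (n+1) → Fin t → ℝ}
    (hcol : ∀ j, ∑ i, ξ i j = 1 / t) (K : Fin (n+1)) (s : ℕ) :
    testVec ξ K ⬝ᵥ (momMstage n t ξ s *ᵥ testVec ξ K) =
      ∑ j ∈ univ.filter (fun j : Fin t => j.val < s), ξ K j * (1 - t * ξ K j) := by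
  rw [dotProduct_momMstage_mulVec, sum_comm]
  refine sum_congr rfl fun j _ => ?_
  have ht : (t : ℝ) ≠ 0 := by have := j.pos; positivity
  have hsq : ∀ i, ξ i j * ((fvec n t i j ⬝ᵥ testVec ξ K) * (fvec n t i j ⬝ᵥ testVec ξ K)) =
      (if i = K then ξ i j * (1 - 2 * t * ξ K j) else 0) + ξ i j * (t * ξ K j) ^ 2 := by
    intro i
    rw [fvec_dotProduct_testVec]
    split_ifs <;> ring
  rw [sum_congr rfl fun i _ => hsq i, sum_add_distrib, sum_ite_eq', ← sum_mul, hcol]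
  simp only [mem_univ, if_true]
  field_simp
  ring

lemma four_mul_le_card_mul_cvec_dotProduct {ξ : Fin (n+1) → Fin t → ℝ}
    (hpos : ∀ i j, 0 ≤ ξ i j) (hcol : ∀ j, ∑ i, ξ i j = 1 / t) {k s : ℕ} {K : Fin (n+1)}
    (hK : K.val = k) (hk : k ≠ 0) (T : Finset (Fin t))
    (hT : ∀ j : Fin t, j.val < s → ξ K j ≠ 0 → j ∈ T) {u : PIdx n t → ℝ}
    (hu : momMstage n t ξ s *ᵥ u = cvec n t k) :
    4 * t ≤ #T * (cvec n t k ⬝ᵥ u) := by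
  have hK0 : K ≠ 0 := fun h => hk (by simp [← hK, h])
  set v := testVec ξ K
  set Q := v ⬝ᵥ (momMstage n t ξ s *ᵥ v)
  have hvc : v ⬝ᵥ cvec n t k = 1 := by
    rw [dotProduct_comm, cvec_dotProduct hK hk]
    simp [v, testVec, hK0.symm]
  have hCS : 1 ≤ Q * (cvec n t k ⬝ᵥ u) := by
    have := sq_dotProduct_momMstage_mulVec_le hpos s u v
    rwa [hu, hvc, dotProduct_comm u, one_pow] at this
  have hV : 0 ≤ cvec n t k ⬝ᵥ u := by
    rw [← hu, dotProduct_comm]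
    exact dotProduct_momMstage_mulVec_self_nonneg hpos s u
  -- `4 t x (1 - t x) = 1 - (2 t x - 1) ^ 2`, and only cohorts in `T` contribute.
  have hQ : 4 * t * Q ≤ #T := by
    rw [show Q = _ from testVec_dotProduct_momMstage_mulVec hcol K s,
      ← sum_filter_of_ne (p := (· ∈ T)), mul_sum]
    · calc ∑ j ∈ _ with j ∈ T, 4 * t * (ξ K j * (1 - t * ξ K j))
          ≤ ∑ j ∈ (univ.filter (fun j : Fin t => j.val < s)).filter (· ∈ T), (1 : ℝ) :=
            sum_le_sum fun j _ => by nlinarith [sq_nonneg (2 * t * ξ K j - 1)]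
        _ ≤ #T := by
            rw [sum_const, nsmul_one]
            exact_mod_cast card_le_card fun j hj => (mem_filter.1 hj).2
    · intro j hj hne
      exact hT j (mem_filter.1 hj).2 (left_ne_zero_of_mul hne)
  nlinarith

lemma exists_momMstage_mulVec_eq_cvec {ξ : Fin (n+1) → Fin t → ℝ} {k s : ℕ} {K : Fin (n+1)}
    (hK : K.val = k) (hk : k ≠ 0) {T : Finset (Fin t)} (hT : T.Nonempty) (hTs : ∀ j ∈ T, j.val < s)
    (hξ0 : ∀ j ∈ T, ξ 0 j = 1 / (2 * t)) (hξK : ∀ j ∈ T, ξ K j = 1 / (2 * t))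
    (hξT : ∀ j ∈ T, ∀ i, i ≠ 0 → i ≠ K → ξ i j = 0)
    (hKs : ∀ j : Fin t, j.val < s → j ∉ T → ξ K j = 0) :
    ∃ u : PIdx n t → ℝ, momMstage n t ξ s *ᵥ u = cvec n t k ∧
      cvec n t k ⬝ᵥ u = 4 * t / #T := by
  have hK0 : K ≠ 0 := fun h => hk (by simp [← hK, h])
  set m : ℝ := (#T : ℝ)
  let u : PIdx n t → ℝ := Sum.elim (fun i => if i = K then 4 * t / m else 0)
    (Sum.elim 0 fun j => if j ∈ T then -(2 * t / m) else 0)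
  have hfu : ∀ i j, fvec n t i j ⬝ᵥ u =
      (if i = K then 4 * t / m else 0) + (if j ∈ T then -(2 * t / m) else 0) := by
    intro i j
    simp [fvec_dotProduct, u]
  have hcohort : ∀ j : Fin t, j.val < s → ∑ i, (ξ i j * (fvec n t i j ⬝ᵥ u)) • fvec n t i j =
      if j ∈ T then (1 / m) • cvec n t k else 0 := by
    intro j hjs
    split_ifs with hj
    · have ht : (t : ℝ) ≠ 0 := by have := j.pos; positivity
      have hm : m ≠ 0 := Nat.cast_ne_zero.2 (card_ne_zero_of_mem hj)
      rw [Fintype.sum_eq_add 0 K hK0.symm fun i hi => by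
          rw [hξT j hj i hi.1 hi.2, zero_mul, zero_smul],
        hfu, hfu, hξ0 j hj, hξK j hj, ← hK, ← fvec_sub_fvec_zero hK0 j, if_neg hK0.symm,
        if_pos rfl, if_pos hj]
      have h0 : 1 / (2 * t) * (0 + -(2 * t / m)) = -(1 / m) := by field_simp; ring
      have h1 : 1 / (2 * t) * (4 * t / m + -(2 * t / m)) = 1 / m := by field_simp; ring
      rw [h0, h1, smul_sub, neg_smul]
      abel
    · refine Fintype.sum_eq_zero _ fun i => ?_
      by_cases hi : i = K
      · rw [hi, hKs j hjs hj, zero_mul, zero_smul]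
      · rw [hfu, if_neg hi, if_neg hj, add_zero, mul_zero, zero_smul]
  refine ⟨u, ?_, ?_⟩
  · have hTS : T ⊆ univ.filter (fun j : Fin t => j.val < s) := fun j hj =>
      mem_filter.2 ⟨mem_univ j, hTs j hj⟩
    rw [momMstage_mulVec, sum_comm, sum_congr rfl fun j hj => hcohort j (mem_filter.1 hj).2,
      sum_ite_mem, inter_eq_right.2 hTS, sum_const, ← Nat.cast_smul_eq_nsmul ℝ, smul_smul,
      mul_one_div_cancel (Nat.cast_ne_zero.2 (card_ne_zero.2 hT)), one_smul]
  · rw [cvec_dotProduct hK hk]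
    simp [u, hK0.symm]

end

lemma highSenn_zero (n : ℕ) (j : Fin (n+1)) : highSenn n 0 j = 1 / (2 * ((n + 1 : ℕ) : ℝ)) := by
  simp [highSenn]

lemma highSenn_of_ne_zero {n : ℕ} {i : Fin (n+1)} (hi : i ≠ 0) (j : Fin (n+1)) :
    highSenn n i j = if i.val = j.val + 1 ∨ (i.val = n ∧ j.val = n)
      then 1 / (2 * ((n + 1 : ℕ) : ℝ)) else 0 := by
  have hi' : i.val ≠ 0 := fun h => hi (Fin.ext h)
  unfold highSenn
  split_ifs <;> first | push_cast; rfl | omega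

lemma four_mul_le_cvec_dotProduct_of_momMstage {n : ℕ} {ξ : Fin (n+1) → Fin (n+1) → ℝ}
    (hξ : isEscalation n (n+1) ξ) {k : ℕ} (hk1 : 1 ≤ k) (hkn : k ≤ n) {u : PIdx n (n+1) → ℝ}
    (hu : momMstage n (n+1) ξ k *ᵥ u = cvec n (n+1) k) :
    4 * ((n : ℝ) + 1) ≤ cvec n (n+1) k ⬝ᵥ u := by
  obtain ⟨⟨hpos, -⟩, hesc, hcol⟩ := hξ
  have h := four_mul_le_card_mul_cvec_dotProduct hpos hcol (k := k) (K := ⟨k, by omega⟩) rfl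
    (by omega) {⟨k - 1, by omega⟩} (fun j hjk hne => ?_) hu
  · simpa using h
  · simp only [mem_singleton, Fin.ext_iff]
    by_contra hj
    exact hne (hesc _ _ (by omega) (by simp only; omega))

lemma two_mul_le_cvec_dotProduct_of_momM {n : ℕ} (hn : 1 ≤ n) {ξ : Fin (n+1) → Fin (n+1) → ℝ}
    (hξ : isEscalation n (n+1) ξ) {u : PIdx n (n+1) → ℝ}
    (hu : momM n (n+1) ξ *ᵥ u = cvec n (n+1) n) :
    2 * ((n : ℝ) + 1) ≤ cvec n (n+1) n ⬝ᵥ u := by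
  obtain ⟨⟨hpos, -⟩, hesc, hcol⟩ := hξ
  rw [momM_eq_momMstage] at hu
  have h := four_mul_le_card_mul_cvec_dotProduct hpos hcol (k := n) (K := Fin.last n) rfl
    (by omega) {⟨n - 1, by omega⟩, Fin.last n} (fun j hjk hne => ?_) hu
  · have hcard : (#({⟨n - 1, by omega⟩, Fin.last n} : Finset (Fin (n+1))) : ℝ) ≤ 2 :=
      by exact_mod_cast card_le_two
    have hV : 0 ≤ cvec n (n+1) n ⬝ᵥ u := by
      rw [← hu, dotProduct_comm]
      exact dotProduct_momMstage_mulVec_self_nonneg hpos _ u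
    push_cast at h
    nlinarith
  · simp only [mem_insert, mem_singleton, Fin.ext_iff, Fin.val_last]
    by_contra hj
    exact hne (hesc _ _ (by omega) (by simp only [Fin.val_last]; omega))

lemma exists_momMstage_highSenn_mulVec_eq_cvec {n k : ℕ} (hk1 : 1 ≤ k) (hkn : k ≤ n) :
    ∃ u : PIdx n (n+1) → ℝ, momMstage n (n+1) (highSenn n) k *ᵥ u = cvec n (n+1) k ∧
      cvec n (n+1) k ⬝ᵥ u = 4 * ((n : ℝ) + 1) := by
  have hK0 : (⟨k, by omega⟩ : Fin (n+1)) ≠ 0 := fun h => by simp [Fin.ext_iff] at h; omega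
  have h := exists_momMstage_mulVec_eq_cvec (ξ := highSenn n) (k := k) (s := k)
    (K := ⟨k, by omega⟩) (T := {⟨k - 1, by omega⟩}) rfl (by omega) (singleton_nonempty _)
    (fun j hj => by rw [mem_singleton.1 hj]; exact Nat.sub_lt hk1 one_pos)
    (fun j _ => highSenn_zero n j)
    (fun j hj => by
      rw [mem_singleton.1 hj, highSenn_of_ne_zero hK0, if_pos (.inl (Nat.sub_add_cancel hk1).symm)])
    (fun j hj i hi0 hiK => ?_) (fun j hjk hj => ?_)
  · simpa using h
  · rw [highSenn_of_ne_zero hi0, if_neg]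
    simp only [mem_singleton, ne_eq, Fin.ext_iff, Fin.val_zero] at hj hi0 hiK
    omega
  · rw [highSenn_of_ne_zero hK0, if_neg]
    simp only [mem_singleton, Fin.ext_iff] at hj ⊢
    omega

lemma exists_momM_highSenn_mulVec_eq_cvec {n : ℕ} (hn : 1 ≤ n) :
    ∃ u : PIdx n (n+1) → ℝ, momM n (n+1) (highSenn n) *ᵥ u = cvec n (n+1) n ∧
      cvec n (n+1) n ⬝ᵥ u = 2 * ((n : ℝ) + 1) := by
  have hK0 : Fin.last n ≠ 0 := fun h => by simp [Fin.ext_iff] at h; omega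
  have hT : ({⟨n - 1, by omega⟩, Fin.last n} : Finset (Fin (n+1))).card = 2 :=
    card_pair fun h => by simp [Fin.ext_iff] at h; omega
  have h := exists_momMstage_mulVec_eq_cvec (ξ := highSenn n) (k := n) (s := n + 1)
    (K := Fin.last n) (T := {⟨n - 1, by omega⟩, Fin.last n}) rfl (by omega) (insert_nonempty _ _)
    (fun j _ => j.isLt) (fun j _ => highSenn_zero n j)
    (fun j hj => by
      rw [highSenn_of_ne_zero hK0, if_pos]
      rcases mem_insert.1 hj with rfl | hj
      · exact .inl (Nat.sub_add_cancel hn).symm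
      · exact .inr ⟨rfl, congrArg Fin.val (mem_singleton.1 hj)⟩)
    (fun j hj i hi0 hiK => ?_) (fun j _ hj => ?_)
  · obtain ⟨u, hu, hval⟩ := h
    refine ⟨u, by rwa [momM_eq_momMstage], ?_⟩
    rw [hval, hT]
    push_cast
    ring
  · rw [highSenn_of_ne_zero hi0, if_neg]
    simp only [mem_insert, mem_singleton, ne_eq, Fin.ext_iff, Fin.val_zero, Fin.val_last]
      at hj hi0 hiK
    omega
  · rw [highSenn_of_ne_zero hK0, if_neg]
    simp only [mem_insert, mem_singleton, Fin.ext_iff, Fin.val_last] at hj ⊢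
    omega

/-- Theorem 4 (LV-optimality of the highest-dose extended Senn design,
t = n+1): (a) at every stage k ∈ {1,…,n}, for every extended dose-escalation
design ξ and every u with M^{(k)}(ξ)u = c_k one has c_k^T u ≥ 4(n+1), with
the value 4(n+1) attained by the highest-dose extended Senn design;
(b) for the full moment matrix, for every extended dose-escalation design ξ
and every u with M(ξ)u = cₙ one has cₙ^T u ≥ 2(n+1), with the value 2(n+1)
attained by the highest-dose extended Senn design. -/
theorem stmt12 (n : ℕ) (hn : 2 ≤ n) :
    ((∀ ξ : Fin (n+1) → Fin (n+1) → ℝ, isEscalation n (n+1) ξ →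
      ∀ k : ℕ, 1 ≤ k → k ≤ n →
        ∀ u : PIdx n (n+1) → ℝ, (momMstage n (n+1) ξ k).mulVec u = cvec n (n+1) k →
          4 * ((n : ℝ) + 1) ≤ cvec n (n+1) k ⬝ᵥ u) ∧
     (∀ k : ℕ, 1 ≤ k → k ≤ n →
      ∃ u : PIdx n (n+1) → ℝ,
        (momMstage n (n+1) (highSenn n) k).mulVec u = cvec n (n+1) k ∧
        cvec n (n+1) k ⬝ᵥ u = 4 * ((n : ℝ) + 1))) ∧
    ((∀ ξ : Fin (n+1) → Fin (n+1) → ℝ, isEscalation n (n+1) ξ →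
      ∀ u : PIdx n (n+1) → ℝ, (momM n (n+1) ξ).mulVec u = cvec n (n+1) n →
        2 * ((n : ℝ) + 1) ≤ cvec n (n+1) n ⬝ᵥ u) ∧
     (∃ u : PIdx n (n+1) → ℝ,
        (momM n (n+1) (highSenn n)).mulVec u = cvec n (n+1) n ∧
        cvec n (n+1) n ⬝ᵥ u = 2 * ((n : ℝ) + 1))) :=
  ⟨⟨fun _ hξ _ hk1 hkn _ hu => four_mul_le_cvec_dotProduct_of_momMstage hξ hk1 hkn hu,
    fun _ hk1 hkn => exists_momMstage_highSenn_mulVec_eq_cvec hk1 hkn⟩,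
   ⟨fun _ hξ _ hu => two_mul_le_cvec_dotProduct_of_momM (by omega) hξ hu,
    exists_momM_highSenn_mulVec_eq_cvec (by omega)⟩⟩
end
end
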